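/- For all integers 0 ≤ k ≤ n, the number of pairs (D, S), where D is a Dyck word of semi-length n+1 and S is a set of k up-steps of D none of which is at ground level, equals B_{n,k}. Equivalently, Σ_D binom(u(D), k) = B_{n,k}, the sum being over all Dyck words D of semi-length n+1, where u(D) is the number of up-steps of D not at ground level. -/

import Mathlib

/-- Catalan's triangle: `C_{n,k} = ((n-k+1)/(n+1)) * binom(n+k, n)` (the division is exact). -/
def catalanTriangle (n k : ℕ) : ℕ := (n - k + 1) * (n + k).choose n / (n + 1)

/-- Borel's triangle: `B_{n,k} = Σ_{s=k}^{n} binom(s,k) * C_{n,s}`. -/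
def borelTriangle (n k : ℕ) : ℕ := ∑ s ∈ Finset.Icc k n, s.choose k * catalanTriangle n s

/-- A Dyck word of semi-length `m`: a word in `U = true` and `D = false` of length `2m` with
`m` `U`'s and `m` `D`'s such that every prefix has at least as many `U`'s as `D`'s. -/
def IsDyckWord (m : ℕ) (w : List Bool) : Prop :=
  w.length = 2 * m ∧ w.count true = m ∧ w.count false = m ∧
    ∀ i, (w.take i).count false ≤ (w.take i).count true

/-- The positions of the up-steps of `w` that are not at ground level. -/
def upStepsNotAtGround (w : List Bool) : Finset ℕ :=
  (Finset.range w.length).filter fun i =>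
    w.getD i false = true ∧ (w.take i).count true ≠ (w.take i).count false

/-!
A nonempty Dyck word factors uniquely as `U a D b` with `a`, `b` Dyck words, and the up-steps
of `U a D b` that are not at ground level are those of `a` together with the non-ground ones of
`b`. Let `N(m, s)` count the Dyck words of semilength `m` with `s` non-ground up-steps. Sorting
the words of semilength `m + 1` by whether `a` is empty gives `N(m + 1, s + 1) = N(m, s + 1) +
N(m + 1, s)` for `s < m`, which together with `N(m, 0) = 1` and `N(m, m) = 0` (for `m > 0`)
forces the ballot numbers `N(n + 1, s) = binom(n + s, n) - binom(n + s, n + 1) = C_{n,s}`.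
A word with `u` non-ground up-steps carries `binom(u, k)` marked sets, so the pairs number
`Σ_s binom(s, k) N(n + 1, s) = B_{n,k}`.
-/

open Finset DyckStep

lemma Nat.count_congr {p q : ℕ → Prop} [DecidablePred p] [DecidablePred q] {n : ℕ}
    (h : ∀ k < n, p k ↔ q k) : count p n = count q n :=
  le_antisymm (count_mono_left fun k hk => (h k hk).1) (count_mono_left fun k hk => (h k hk).2)

lemma List.count_eq_nat_count_getD {α : Type*} [DecidableEq α] (l : List α) (a d : α) :
    l.count a = Nat.count (fun i => l.getD i d = a) l.length := by
  induction l with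
  | nil => simp
  | cons b l ih => simp [Nat.count_succ', ih, List.count_cons]

lemma card_upStepsNotAtGround (w : List Bool) :
    #(upStepsNotAtGround w) = Nat.count (fun i =>
      w.getD i false = true ∧ (w.take i).count true ≠ (w.take i).count false) w.length :=
  (Nat.count_eq_card_filter_range _ _).symm

lemma card_upStepsNotAtGround_le_count (w : List Bool) :
    #(upStepsNotAtGround w) ≤ w.count true := by
  rw [card_upStepsNotAtGround, w.count_eq_nat_count_getD true false]
  exact Nat.count_mono_left fun _ _ h => h.1

lemma card_upStepsNotAtGround_append {x : List Bool} (hx : x.count true = x.count false)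
    (y : List Bool) :
    #(upStepsNotAtGround (x ++ y)) = #(upStepsNotAtGround x) + #(upStepsNotAtGround y) := by
  simp only [card_upStepsNotAtGround, List.length_append, Nat.count_add]
  congr 1
  · refine Nat.count_congr fun i hi => ?_
    rw [List.getD_append _ _ _ _ hi, List.take_append_of_le_length hi.le]
  · refine Nat.count_congr fun j _ => ?_
    rw [List.getD_append_right _ _ _ _ (Nat.le_add_right _ _), List.take_append,
      List.take_of_length_le (Nat.le_add_right _ _), Nat.add_sub_cancel_left,
      List.count_append, List.count_append, hx, ne_eq, Nat.add_left_cancel_iff]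

lemma card_upStepsNotAtGround_nest {x : List Bool}
    (hx : ∀ i, (x.take i).count false ≤ (x.take i).count true) :
    #(upStepsNotAtGround (true :: x ++ [false])) = x.count true := by
  rw [card_upStepsNotAtGround, x.count_eq_nat_count_getD true false, List.length_append,
    List.length_cons, List.length_singleton, Nat.count_succ, Nat.count_succ', if_neg (by simp),
    if_neg (by simp), add_zero, add_zero]
  refine Nat.count_congr fun k hk => ?_
  rw [List.cons_append, List.getD_cons_succ, List.getD_append _ _ _ _ hk, List.take_succ_cons,
    List.take_append_of_le_length hk.le, List.count_cons_self, List.count_cons_of_ne (by simp)]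
  have := hx k
  exact ⟨And.left, fun h => ⟨h, by omega⟩⟩

def DyckStep.equivBool : DyckStep ≃ Bool where
  toFun
    | U => true
    | D => false
  invFun b := if b then U else D
  left_inv s := by cases s <;> rfl
  right_inv b := by cases b <;> rfl

@[simp] lemma DyckStep.equivBool_U : equivBool U = true := rfl

@[simp] lemma DyckStep.equivBool_D : equivBool D = false := rfl

lemma List.count_map_equivBool (l : List DyckStep) (s : DyckStep) :
    (l.map equivBool).count (equivBool s) = l.count s :=
  l.count_map_of_injective _ equivBool.injective s

namespace DyckWord

@[simp] lemma insidePart_nest_add (p q : DyckWord) : (p.nest + q).insidePart = p := by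
  rw [insidePart_add nest_ne_zero, insidePart_nest]

@[simp] lemma outsidePart_nest_add (p q : DyckWord) : (p.nest + q).outsidePart = q := by
  rw [outsidePart_add nest_ne_zero, outsidePart_nest, zero_add]

lemma semilength_eq_zero_iff {p : DyckWord} : p.semilength = 0 ↔ p = 0 := by
  rw [← toList_eq_nil, ← List.length_eq_zero_iff, ← two_mul_semilength_eq_length]
  omega

lemma exists_eq_nest_add {p : DyckWord} (hp : p ≠ 0) : ∃ a b : DyckWord, p = a.nest + b :=
  ⟨_, _, (nest_insidePart_add_outsidePart hp).symm⟩

def toBools (p : DyckWord) : List Bool := p.toList.map equivBool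

lemma toBools_injective : Function.Injective toBools := fun _ _ h =>
  DyckWord.ext (List.map_injective_iff.2 equivBool.injective h)

lemma isDyckWord_toBools (p : DyckWord) : IsDyckWord p.semilength p.toBools := by
  refine ⟨by simp [toBools], p.toList.count_map_equivBool U,
    (p.toList.count_map_equivBool D).trans p.semilength_eq_count_D.symm, fun i => ?_⟩
  rw [toBools, ← List.map_take]
  exact (List.count_map_equivBool _ D).trans_le
    ((p.count_D_le_count_U i).trans_eq (List.count_map_equivBool _ U).symm)

lemma exists_toBools_eq {m : ℕ} {w : List Bool} (hw : IsDyckWord m w) :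
    ∃ p : DyckWord, p.semilength = m ∧ p.toBools = w := by
  have hcount (l : List Bool) (b : Bool) :
      (l.map equivBool.symm).count (equivBool.symm b) = l.count b :=
    l.count_map_of_injective _ equivBool.symm.injective b
  obtain ⟨-, htrue, hfalse, hprefix⟩ := hw
  refine ⟨⟨w.map equivBool.symm, ?_, fun i => ?_⟩, (hcount w true).trans htrue, by simp [toBools]⟩
  · exact (hcount w true).trans (htrue.trans (hfalse.symm.trans (hcount w false).symm))
  · rw [← List.map_take]
    exact (hcount _ false).trans_le ((hprefix i).trans_eq (hcount _ true).symm)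

lemma toBools_nest_add (p q : DyckWord) :
    (p.nest + q).toBools = (true :: p.toBools ++ [false]) ++ q.toBools := by
  show ([U] ++ p.toList ++ [D] ++ q.toList).map equivBool = _
  simp [toBools]

def nonGroundUps (p : DyckWord) : ℕ := #(upStepsNotAtGround p.toBools)

lemma nonGroundUps_nest_add (p q : DyckWord) :
    (p.nest + q).nonGroundUps = p.semilength + q.nonGroundUps := by
  obtain ⟨-, htrue, hfalse, hprefix⟩ := p.isDyckWord_toBools
  rw [nonGroundUps, toBools_nest_add, card_upStepsNotAtGround_append (by simp [htrue, hfalse]),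
    card_upStepsNotAtGround_nest hprefix, htrue, nonGroundUps]

lemma nonGroundUps_le_semilength (p : DyckWord) : p.nonGroundUps ≤ p.semilength :=
  (card_upStepsNotAtGround_le_count _).trans_eq p.isDyckWord_toBools.2.1

lemma nonGroundUps_lt_semilength {p : DyckWord} (hp : p ≠ 0) :
    p.nonGroundUps < p.semilength := by
  obtain ⟨a, b, rfl⟩ := exists_eq_nest_add hp
  rw [nonGroundUps_nest_add, semilength_add, semilength_nest]
  have := b.nonGroundUps_le_semilength
  omega

def ofSemilength (m : ℕ) : Finset DyckWord :=
  univ.map (Function.Embedding.subtype fun p : DyckWord => p.semilength = m)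

@[simp] lemma mem_ofSemilength {m : ℕ} {p : DyckWord} :
    p ∈ ofSemilength m ↔ p.semilength = m := by
  simp [ofSemilength]

def countNonGroundUps (m s : ℕ) : ℕ := #{p ∈ ofSemilength m | p.nonGroundUps = s}

lemma card_filter_insidePart_eq_zero (m s : ℕ) :
    #{p ∈ ofSemilength (m + 1) | p.nonGroundUps = s ∧ p.insidePart = 0} =
      countNonGroundUps m s := by
  refine card_nbij' outsidePart (nest 0 + ·) (fun p hp => ?_) (fun p hp => ?_)
    (fun p hp => ?_) (fun p _ => by simp)
  all_goals simp only [coe_filter, Set.mem_ofPred_eq, mem_ofSemilength] at hp ⊢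
  · obtain ⟨a, b, rfl⟩ := exists_eq_nest_add (p := p) (semilength_eq_zero_iff.not.1 (by omega))
    simp only [insidePart_nest_add] at hp
    obtain ⟨hsl, hu, rfl⟩ := hp
    simp_all [nonGroundUps_nest_add]
    omega
  · simp_all [nonGroundUps_nest_add]
    omega
  · obtain ⟨a, b, rfl⟩ := exists_eq_nest_add (p := p) (semilength_eq_zero_iff.not.1 (by omega))
    simp_all

/-- The bijection is the rotation `U (U a D b) D c ↦ U a D (U b D c)`. -/
lemma card_filter_insidePart_ne_zero (m s : ℕ) :
    #{p ∈ ofSemilength (m + 1) | p.nonGroundUps = s ∧ p.insidePart ≠ 0} =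
      #{p ∈ ofSemilength (m + 1) | p.nonGroundUps + 1 = s ∧ p.outsidePart ≠ 0} := by
  refine card_nbij'
    (fun p => p.insidePart.insidePart.nest + (p.insidePart.outsidePart.nest + p.outsidePart))
    (fun p => (p.insidePart.nest + p.outsidePart.insidePart).nest + p.outsidePart.outsidePart)
    (fun p hp => ?_) (fun p hp => ?_) (fun p hp => ?_) (fun p hp => ?_)
  all_goals
    simp only [coe_filter, Set.mem_ofPred_eq, mem_ofSemilength] at hp ⊢
    obtain ⟨a, c, rfl⟩ := exists_eq_nest_add (p := p) (semilength_eq_zero_iff.not.1 (by omega))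
  · obtain ⟨a, b, rfl⟩ := exists_eq_nest_add (p := a) (by simp_all)
    simp_all [nonGroundUps_nest_add]
    omega
  · obtain ⟨b, c, rfl⟩ := exists_eq_nest_add (p := c) (by simp_all)
    simp_all [nonGroundUps_nest_add]
    omega
  · obtain ⟨a, b, rfl⟩ := exists_eq_nest_add (p := a) (by simp_all)
    simp
  · obtain ⟨b, c, rfl⟩ := exists_eq_nest_add (p := c) (by simp_all)
    simp

lemma countNonGroundUps_succ (m s : ℕ) :
    countNonGroundUps (m + 1) s = countNonGroundUps m s +
      #{p ∈ ofSemilength (m + 1) | p.nonGroundUps + 1 = s ∧ p.outsidePart ≠ 0} := by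
  rw [← card_filter_insidePart_eq_zero m s, ← card_filter_insidePart_ne_zero, countNonGroundUps,
    ← card_filter_add_card_filter_not (fun p => p.insidePart = 0), filter_filter, filter_filter]

lemma countNonGroundUps_zero_right (m : ℕ) : countNonGroundUps m 0 = 1 := by
  induction m with
  | zero =>
    have : {p ∈ ofSemilength 0 | p.nonGroundUps = 0} = {0} := by
      ext p
      simp only [mem_filter, mem_ofSemilength, semilength_eq_zero_iff, mem_singleton,
        and_iff_left_iff_imp]
      rintro rfl
      rfl
    rw [countNonGroundUps, this, card_singleton]
  | succ m ih => simp [countNonGroundUps_succ, ih]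

lemma countNonGroundUps_succ_succ {m s : ℕ} (hs : s < m) :
    countNonGroundUps (m + 1) (s + 1) =
      countNonGroundUps m (s + 1) + countNonGroundUps (m + 1) s := by
  rw [countNonGroundUps_succ, countNonGroundUps]
  congr 2
  refine filter_congr fun p hp => ?_
  rw [mem_ofSemilength] at hp
  obtain ⟨a, b, rfl⟩ := exists_eq_nest_add (p := p) (semilength_eq_zero_iff.not.1 (by omega))
  simp only [outsidePart_nest_add, nonGroundUps_nest_add, add_left_inj, and_iff_left_iff_imp]
  rintro hu rfl
  simp at hp hu
  omega

lemma countNonGroundUps_self {m : ℕ} (hm : m ≠ 0) : countNonGroundUps m m = 0 := by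
  rw [countNonGroundUps, card_eq_zero, filter_eq_empty_iff]
  intro p hp
  rw [mem_ofSemilength] at hp
  have := nonGroundUps_lt_semilength (p := p) (semilength_eq_zero_iff.not.1 (by omega))
  omega

lemma countNonGroundUps_add_choose {n s : ℕ} (hs : s ≤ n + 1) :
    countNonGroundUps (n + 1) s + (n + s).choose (n + 1) = (n + s).choose n := by
  induction n generalizing s with
  | zero => interval_cases s <;> simp [countNonGroundUps_zero_right, countNonGroundUps_self]
  | succ n ih =>
    induction s with
    | zero => simp [countNonGroundUps_zero_right]
    | succ t iht =>
      by_cases ht : t = n + 1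
      · subst ht
        rw [countNonGroundUps_self (by omega), show n + 1 + (n + 1 + 1) = 2 * (n + 1) + 1 by ring,
          zero_add, Nat.choose_symm_half]
      have h1 := ih (s := t + 1) (by omega)
      rw [show n + (t + 1) = n + 1 + t by ring] at h1
      have h2 := iht (by omega)
      have pascal1 : (n + 1 + (t + 1)).choose (n + 1 + 1) =
          (n + 1 + t).choose (n + 1) + (n + 1 + t).choose (n + 1 + 1) :=
        Nat.choose_succ_succ' _ _
      have pascal2 : (n + 1 + (t + 1)).choose (n + 1) =
          (n + 1 + t).choose n + (n + 1 + t).choose (n + 1) :=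
        Nat.choose_succ_succ' _ _
      rw [countNonGroundUps_succ_succ (by omega)]
      omega

end DyckWord

lemma catalanTriangle_add_choose {n k : ℕ} (hk : k ≤ n) :
    catalanTriangle n k + (n + k).choose (n + 1) = (n + k).choose n := by
  set X := (n + k).choose n
  set Y := (n + k).choose (n + 1)
  have hY : Y * (n + 1) = X * k := by
    rw [Nat.choose_succ_right_eq, Nat.add_sub_cancel_left]
  have hYX : Y ≤ X :=
    Nat.le_of_mul_le_mul_right (hY.trans_le (Nat.mul_le_mul_left X (by omega))) n.succ_pos
  have hnum : (n - k + 1) * X = (n + 1) * (X - Y) := by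
    zify [hk, hYX] at hY ⊢
    linear_combination hY
  rw [catalanTriangle, hnum, Nat.mul_div_cancel_left _ n.succ_pos]
  omega

lemma borelTriangle_eq_sum_range (n k : ℕ) :
    borelTriangle n k = ∑ s ∈ range (n + 1), s.choose k * catalanTriangle n s := by
  rw [borelTriangle]
  refine sum_subset (fun s hs => by simp at hs ⊢; omega) fun s hs hs' => ?_
  rw [Nat.choose_eq_zero_of_lt (by simp at hs hs'; omega), zero_mul]

namespace DyckWord

lemma countNonGroundUps_eq_catalanTriangle {n s : ℕ} (hs : s ≤ n) :
    countNonGroundUps (n + 1) s = catalanTriangle n s := by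
  have := catalanTriangle_add_choose hs
  have := countNonGroundUps_add_choose (n := n) (s := s) (by omega)
  omega

lemma sum_choose_nonGroundUps (n k : ℕ) :
    ∑ p ∈ ofSemilength (n + 1), p.nonGroundUps.choose k =
      ∑ s ∈ range (n + 1), s.choose k * countNonGroundUps (n + 1) s := by
  rw [← sum_fiberwise_of_maps_to' (t := range (n + 1)) (g := nonGroundUps)
    (f := fun s => s.choose k)]
  · refine sum_congr rfl fun s _ => ?_
    rw [sum_const, smul_eq_mul, mul_comm, countNonGroundUps]
  · intro p hp
    rw [mem_ofSemilength] at hp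
    rw [mem_range, ← hp]
    exact nonGroundUps_lt_semilength (by rintro rfl; simp at hp)

end DyckWord

open DyckWord in
lemma natCard_markedDyckWords (m k : ℕ) :
    Nat.card {q : List Bool × Finset ℕ // IsDyckWord m q.1 ∧
        q.2 ⊆ upStepsNotAtGround q.1 ∧ q.2.card = k} =
      ∑ p ∈ ofSemilength m, p.nonGroundUps.choose k := by
  let f : (Σ p : ofSemilength m, powersetCard k (upStepsNotAtGround p.1.toBools)) →
      {q : List Bool × Finset ℕ // IsDyckWord m q.1 ∧
        q.2 ⊆ upStepsNotAtGround q.1 ∧ q.2.card = k} := fun x =>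
    ⟨(x.1.1.toBools, x.2.1),
      by simpa [mem_ofSemilength.1 x.1.2] using x.1.1.isDyckWord_toBools,
      mem_powersetCard.1 x.2.2⟩
  have hf : Function.Bijective f := by
    refine ⟨fun x y hxy => ?_, fun ⟨⟨w, t⟩, hw, ht⟩ => ?_⟩
    · simp only [f, Subtype.mk.injEq, Prod.mk.injEq] at hxy
      exact Sigma.subtype_ext (Subtype.ext (toBools_injective hxy.1)) hxy.2
    · obtain ⟨p, hp, rfl⟩ := exists_toBools_eq hw
      exact ⟨⟨⟨p, mem_ofSemilength.2 hp⟩, ⟨t, mem_powersetCard.2 ht⟩⟩, rfl⟩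
  rw [← Nat.card_eq_of_bijective f hf, Nat.card_sigma]
  simp only [Nat.card_eq_fintype_card, Fintype.card_coe, card_powersetCard]
  exact sum_coe_sort (ofSemilength m) fun p => p.nonGroundUps.choose k

theorem card_markedDyckWords_general (n k : ℕ) :
    Nat.card {p : List Bool × Finset ℕ // IsDyckWord (n + 1) p.1 ∧
        p.2 ⊆ upStepsNotAtGround p.1 ∧ p.2.card = k}
      = borelTriangle n k := by
  rw [natCard_markedDyckWords, DyckWord.sum_choose_nonGroundUps, borelTriangle_eq_sum_range]
  exact sum_congr rfl fun s hs =>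
    by rw [DyckWord.countNonGroundUps_eq_catalanTriangle (Nat.lt_succ_iff.1 (mem_range.1 hs))]

/-- The number of pairs `(D, S)` with `D` a Dyck word of semi-length `n+1` and `S` a set of
`k` up-steps of `D`, none at ground level, equals `B_{n,k}`. -/
theorem card_markedDyckWords (n k : ℕ) (hk : k ≤ n) :
    Nat.card {p : List Bool × Finset ℕ // IsDyckWord (n + 1) p.1 ∧
        p.2 ⊆ upStepsNotAtGround p.1 ∧ p.2.card = k}
      = borelTriangle n k :=
  card_markedDyckWords_general n k
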